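/- Let G be a finitely generated group with semigroup presentation ψ : Σ → G, and let K be a subgroup of G. If the language L(G,K,ψ) = { w ∈ Σ* : ψ(w) ∈ K } is context-free, then for every g ∈ G the language L(G, g⁻¹Kg, ψ) = { w ∈ Σ* : ψ(w) ∈ g⁻¹Kg } is also context-free. -/

import Mathlib

/-!
With `ψ u = g` and `ψ v = g⁻¹`, the word problem of `g⁻¹Kg` is `{w | u ++ w ++ v ∈ L(G,K,ψ)}`,
so it suffices that context-free languages are closed under quotients by a word on either side.
Right quotients reduce to left ones by reversal, and left quotients to quotients by a letter `a`.
For these, a grammar gets a second copy `A'` of each nonterminal `A`, meant to derive `w` exactly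
when `A` derives `a :: w`: a rule `A → pre s post` with `pre` nullable yields `A' → post` if
`s = a` and `A' → B' post` if `s = B`.
-/

open ContextFreeGrammar Function

variable {T : Type*}

namespace Symbol

variable {N N' : Type*}

def mapNT (f : N → N') : Symbol T N → Symbol T N'
  | terminal t => terminal t
  | nonterminal A => nonterminal (f A)

@[simp] lemma mapNT_terminal (f : N → N') (t : T) : (terminal t).mapNT f = terminal t := rfl

@[simp] lemma mapNT_nonterminal (f : N → N') (A : N) :
    (nonterminal A : Symbol T N).mapNT f = nonterminal (f A) := rfl

@[simp] lemma mapNT_comp_terminal (f : N → N') :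
    mapNT f ∘ terminal = (terminal : T → Symbol T N') := rfl

lemma mapNT_injective {f : N → N'} (hf : Injective f) : Injective (mapNT (T := T) f) := by
  rintro (s | A) (t | B) h <;> simp_all [hf.eq_iff]

end Symbol

namespace ContextFreeRule

variable {N N' : Type*}

def mapNT (f : N → N') (r : ContextFreeRule T N) : ContextFreeRule T N' :=
  ⟨f r.input, r.output.map (Symbol.mapNT f)⟩

lemma Rewrites.mapNT (f : N → N') {r : ContextFreeRule T N} {u v : List (Symbol T N)}
    (h : r.Rewrites u v) :
    (r.mapNT f).Rewrites (u.map (Symbol.mapNT f)) (v.map (Symbol.mapNT f)) := by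
  induction h with
  | head s => rw [List.map_cons, List.map_append]; exact .head _
  | cons x _ ih => exact Rewrites.cons _ ih

lemma not_rewrites_nil {r : ContextFreeRule T N} {v : List (Symbol T N)} : ¬ r.Rewrites [] v := by
  rintro ⟨⟩

lemma rewrites_cons_iff {r : ContextFreeRule T N} {x : Symbol T N} {u v : List (Symbol T N)} :
    r.Rewrites (x :: u) v ↔
      (x = .nonterminal r.input ∧ v = r.output ++ u) ∨ ∃ v', v = x :: v' ∧ r.Rewrites u v' := by
  constructor
  · rintro (_ | ⟨_, h⟩)
    · exact .inl ⟨rfl, rfl⟩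
    · exact .inr ⟨_, rfl, h⟩
  · rintro (⟨rfl, rfl⟩ | ⟨v', rfl, h⟩)
    · exact .head u
    · exact .cons x h

end ContextFreeRule

namespace ContextFreeGrammar

variable {g : ContextFreeGrammar T} {a : T}

variable (g) in
def Nullable (s : Symbol T g.NT) : Prop := g.Derives [s] []

lemma derives_of_nullable_prefix {pre : List (Symbol T g.NT)} (hpre : ∀ x ∈ pre, g.Nullable x)
    (u : List (Symbol T g.NT)) : g.Derives (pre ++ u) u := by
  induction pre with
  | nil => rfl
  | cons x pre ih =>
    have hx : g.Derives ([x] ++ (pre ++ u)) ([] ++ (pre ++ u)) :=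
      (hpre x List.mem_cons_self).append_right _
    exact hx.trans (ih fun y hy => hpre y (List.mem_cons_of_mem x hy))

lemma nullable_input {r : ContextFreeRule T g.NT} (hr : r ∈ g.rules)
    (hout : ∀ x ∈ r.output, g.Nullable x) : g.Nullable (.nonterminal r.input) :=
  Produces.trans_derives ⟨r, hr, .input_output⟩ (by simpa using derives_of_nullable_prefix hout [])

variable (a) in
open Classical in
noncomputable def quotientHead {N : Type*} : Symbol T N → Finset (List (Symbol T (N ⊕ N)))
  | .terminal b => if b = a then {[]} else ∅
  | .nonterminal B => {[.nonterminal (.inr B)]}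

lemma mem_quotientHead {N : Type*} {s : Symbol T N} {h : List (Symbol T (N ⊕ N))} :
    h ∈ quotientHead a s ↔
      (s = .terminal a ∧ h = []) ∨ ∃ B, s = .nonterminal B ∧ h = [.nonterminal (.inr B)] := by
  cases s with
  | terminal b => by_cases hb : b = a <;> simp [quotientHead, hb, Ne.symm]
  | nonterminal B => simp [quotientHead]

variable (g a) in
open Classical in
noncomputable def quotientOutputs :
    List (Symbol T g.NT) → Finset (List (Symbol T (g.NT ⊕ g.NT)))
  | [] => ∅
  | s :: post => (quotientHead a s).image (· ++ post.map (.mapNT .inl)) ∪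
      if g.Nullable s then quotientOutputs post else ∅

lemma mem_quotientOutputs {out : List (Symbol T g.NT)} {o : List (Symbol T (g.NT ⊕ g.NT))} :
    o ∈ quotientOutputs g a out ↔ ∃ pre s post, out = pre ++ s :: post ∧
      (∀ x ∈ pre, g.Nullable x) ∧ ∃ h ∈ quotientHead a s, o = h ++ post.map (.mapNT .inl) := by
  induction out with
  | nil => simp [quotientOutputs]
  | cons s post ih =>
    simp only [quotientOutputs, Finset.mem_union, Finset.mem_image]
    constructor
    · rintro (⟨h, hh, rfl⟩ | ho)
      · exact ⟨[], s, post, rfl, by simp, h, hh, rfl⟩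
      · split_ifs at ho with hs
        · obtain ⟨pre, s', post', rfl, hpre, hh⟩ := ih.mp ho
          exact ⟨s :: pre, s', post', rfl, by simpa [hs] using hpre, hh⟩
        · simp at ho
    · rintro ⟨_ | ⟨x, pre⟩, s', post', heq, hpre, h, hh, rfl⟩
      · obtain ⟨rfl, rfl⟩ := List.cons_eq_cons.mp heq
        exact .inl ⟨h, hh, rfl⟩
      · obtain ⟨rfl, rfl⟩ := List.cons_eq_cons.mp heq
        rw [if_pos (hpre s List.mem_cons_self)]
        exact .inr (ih.mpr ⟨pre, s', post', rfl, fun y hy => hpre y (.tail s hy), h, hh, rfl⟩)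

variable (g a) in
open Classical in
/-- `inl A` is a copy of `A`, and `inr A` derives `w` exactly when `A` derives `a :: w`. -/
noncomputable abbrev leftQuotient : ContextFreeGrammar T where
  NT := g.NT ⊕ g.NT
  initial := .inr g.initial
  rules := g.rules.image (ContextFreeRule.mapNT .inl) ∪
    g.rules.biUnion fun r => (quotientOutputs g a r.output).image (⟨.inr r.input, ·⟩)

lemma mem_leftQuotient_rules {r' : ContextFreeRule T (g.NT ⊕ g.NT)} :
    r' ∈ (g.leftQuotient a).rules ↔ (∃ r ∈ g.rules, r.mapNT .inl = r') ∨
      ∃ r ∈ g.rules, r'.input = .inr r.input ∧ r'.output ∈ quotientOutputs g a r.output := by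
  simp only [leftQuotient, Finset.mem_union, Finset.mem_image, Finset.mem_biUnion]
  refine or_congr Iff.rfl (exists_congr fun r => and_congr Iff.rfl ⟨?_, ?_⟩)
  · rintro ⟨o, ho, rfl⟩
    exact ⟨rfl, ho⟩
  · rintro ⟨hin, ho⟩
    exact ⟨r'.output, ho, by rw [← hin]⟩

lemma mapNT_mem_leftQuotient_rules {r : ContextFreeRule T g.NT} (hr : r ∈ g.rules) :
    r.mapNT .inl ∈ (g.leftQuotient a).rules :=
  mem_leftQuotient_rules.mpr (.inl ⟨r, hr, rfl⟩)

lemma exists_produces_of_leftQuotient_rewrites {r' : ContextFreeRule T (g.NT ⊕ g.NT)}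
    (hr' : r' ∈ (g.leftQuotient a).rules) {β : List (Symbol T g.NT)}
    {v : List (Symbol T (g.NT ⊕ g.NT))} (h : r'.Rewrites (β.map (.mapNT .inl)) v) :
    ∃ β', v = β'.map (.mapNT .inl) ∧ g.Produces β β' := by
  induction β generalizing v with
  | nil => exact absurd h ContextFreeRule.not_rewrites_nil
  | cons x β ih =>
    rcases ContextFreeRule.rewrites_cons_iff.mp h with ⟨hx, rfl⟩ | ⟨v', rfl, h'⟩
    · cases x with
      | terminal t => simp at hx
      | nonterminal B =>
        rcases mem_leftQuotient_rules.mp hr' with ⟨r, hr, rfl⟩ | ⟨r, -, hin, -⟩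
        · obtain rfl : r.input = B := by simpa [ContextFreeRule.mapNT] using hx.symm
          exact ⟨r.output ++ β, by simp [ContextFreeRule.mapNT], r, hr, .head β⟩
        · simp [hin] at hx
    · obtain ⟨β', rfl, r, hr, hrw⟩ := ih h'
      exact ⟨x :: β', rfl, r, hr, .cons x hrw⟩

lemma exists_derives_of_leftQuotient_produces {u₀ β : List (Symbol T g.NT)} {s : Symbol T g.NT}
    {h v : List (Symbol T (g.NT ⊕ g.NT))} (hh : h ∈ quotientHead a s)
    (hd : g.Derives u₀ (s :: β)) (hp : (g.leftQuotient a).Produces (h ++ β.map (.mapNT .inl)) v) :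
    ∃ s' β', ∃ h' ∈ quotientHead a s', v = h' ++ β'.map (.mapNT .inl) ∧
      g.Derives u₀ (s' :: β') := by
  obtain ⟨r', hr', hrw⟩ := hp
  rcases mem_quotientHead.mp hh with ⟨rfl, rfl⟩ | ⟨B, rfl, rfl⟩
  · obtain ⟨β', rfl, hβ⟩ := exists_produces_of_leftQuotient_rewrites hr' hrw
    exact ⟨_, β', [], hh, rfl, hd.trans_produces (hβ.append_left [_])⟩
  rcases ContextFreeRule.rewrites_cons_iff.mp hrw with ⟨hin, rfl⟩ | ⟨v', rfl, hrw'⟩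
  · rcases mem_leftQuotient_rules.mp hr' with ⟨r, -, rfl⟩ | ⟨r, hr, hin', ho⟩
    · simp [ContextFreeRule.mapNT] at hin
    obtain rfl : B = r.input := by simpa [hin'] using hin
    obtain ⟨pre, s', post, hout, hpre, h', hh', ho⟩ := mem_quotientOutputs.mp ho
    refine ⟨s', post ++ β, h', hh', by simp [ho], ?_⟩
    have hstep : g.Produces (.nonterminal r.input :: β) (pre ++ s' :: (post ++ β)) :=
      ⟨r, hr, by simpa [hout] using ContextFreeRule.Rewrites.head (r := r) β⟩
    exact (hd.trans_produces hstep).trans (derives_of_nullable_prefix hpre _)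
  · obtain ⟨β', rfl, hβ⟩ := exists_produces_of_leftQuotient_rewrites hr' hrw'
    exact ⟨_, β', _, hh, rfl, hd.trans_produces (hβ.append_left [_])⟩

lemma exists_derives_of_leftQuotient_derives {A : g.NT} {v : List (Symbol T (g.NT ⊕ g.NT))}
    (hv : (g.leftQuotient a).Derives [.nonterminal (.inr A)] v) :
    ∃ s β, ∃ h ∈ quotientHead a s, v = h ++ β.map (.mapNT .inl) ∧
      g.Derives [.nonterminal A] (s :: β) := by
  induction hv with
  | refl => exact ⟨.nonterminal A, [], _, mem_quotientHead.mpr (.inr ⟨A, rfl, rfl⟩), rfl, .refl _⟩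
  | tail _ hp ih =>
    obtain ⟨s, β, h, hh, rfl, hd⟩ := ih
    exact exists_derives_of_leftQuotient_produces hh hd hp

variable (g a) in
def QuotientSplit (u : List (Symbol T g.NT)) (w : List T) : Prop :=
  ∃ pre s post, u = pre ++ s :: post ∧ (∀ x ∈ pre, g.Nullable x) ∧
    ∃ h ∈ quotientHead a s,
      (g.leftQuotient a).Derives (h ++ post.map (.mapNT .inl)) (w.map .terminal)

lemma QuotientSplit.of_rewrites {r : ContextFreeRule T g.NT} (hr : r ∈ g.rules)
    {u v : List (Symbol T g.NT)} (huv : r.Rewrites u v) {w : List T}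
    (hv : g.QuotientSplit a v w) : g.QuotientSplit a u w := by
  induction huv with
  | head t =>
    obtain ⟨pre, s, post, heq, hpre, h, hh, hd⟩ := hv
    rcases List.append_eq_append_iff.mp heq with ⟨c, rfl, rfl⟩ | ⟨c, hout, hc⟩
    · refine ⟨.nonterminal r.input :: c, s, post, rfl, ?_, h, hh, hd⟩
      exact List.forall_mem_cons.mpr
        ⟨nullable_input hr fun x hx => hpre x (List.mem_append_left c hx),
          fun x hx => hpre x (List.mem_append_right _ hx)⟩
    rcases List.cons_eq_append_iff.mp hc with ⟨rfl, rfl⟩ | ⟨c, rfl, rfl⟩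
    · refine ⟨[.nonterminal r.input], s, post, rfl, ?_, h, hh, hd⟩
      exact List.forall_mem_singleton.mpr (nullable_input hr (by simpa [hout] using hpre))
    · refine ⟨[], _, t, rfl, by simp, _, mem_quotientHead.mpr (.inr ⟨_, rfl, rfl⟩), ?_⟩
      have hrule : (⟨.inr r.input, h ++ c.map (.mapNT .inl)⟩ : ContextFreeRule T (g.NT ⊕ g.NT)) ∈
          (g.leftQuotient a).rules :=
        mem_leftQuotient_rules.mpr (.inr ⟨r, hr, rfl, mem_quotientOutputs.mpr
          ⟨pre, s, c, hout, hpre, h, hh, rfl⟩⟩)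
      refine Produces.trans_derives ⟨_, hrule, .head _⟩ ?_
      simpa using hd
  | cons x huv ih =>
    obtain ⟨_ | ⟨y, pre⟩, s, post, heq, hpre, h, hh, hd⟩ := hv
    · obtain ⟨rfl, rfl⟩ := List.cons_eq_cons.mp heq
      refine ⟨[], x, _, rfl, by simp, h, hh, ?_⟩
      exact Produces.trans_derives
        ⟨_, mapNT_mem_leftQuotient_rules hr, (huv.mapNT _).append_left h⟩ hd
    · obtain ⟨rfl, rfl⟩ := List.cons_eq_cons.mp heq
      obtain ⟨pre', s', post', rfl, hpre', hrest⟩ :=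
        ih ⟨pre, s, post, rfl, fun z hz => hpre z (.tail _ hz), h, hh, hd⟩
      exact ⟨x :: pre', s', post', rfl, by simpa [hpre x List.mem_cons_self] using hpre', hrest⟩

lemma quotientSplit_of_derives {u : List (Symbol T g.NT)} {w : List T}
    (huw : g.Derives u ((a :: w).map .terminal)) : g.QuotientSplit a u w := by
  induction huw using Relation.ReflTransGen.head_induction_on with
  | refl =>
    exact ⟨[], _, w.map .terminal, rfl, by simp, [], mem_quotientHead.mpr (.inl ⟨rfl, rfl⟩),
      by simp [Derives.refl]⟩
  | head hp _ ih =>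
    obtain ⟨r, hr, hrw⟩ := hp
    exact ih.of_rewrites hr hrw

theorem language_leftQuotient : (g.leftQuotient a).language = {w | a :: w ∈ g.language} := by
  ext w
  constructor
  · intro hw
    obtain ⟨s, β, h, hh, heq, hd⟩ := exists_derives_of_leftQuotient_derives hw
    rcases mem_quotientHead.mp hh with ⟨rfl, rfl⟩ | ⟨B, rfl, rfl⟩
    · obtain rfl : β = w.map .terminal :=
        List.map_injective_iff.mpr (Symbol.mapNT_injective Sum.inl_injective)
          (by simpa using heq.symm)
      exact hd
    · cases w <;> simp at heq
  · intro hw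
    obtain ⟨_ | ⟨y, pre⟩, s, post, heq, -, h, hh, hd⟩ := quotientSplit_of_derives hw
    · obtain ⟨rfl, rfl⟩ := List.cons_eq_cons.mp heq
      rcases mem_quotientHead.mp hh with ⟨⟨⟩, -⟩ | ⟨_, ⟨⟩, rfl⟩
      simpa using hd
    · simp at heq

end ContextFreeGrammar

namespace Language.IsContextFree

variable {L : Language T}

theorem cons_quotient (h : L.IsContextFree) (a : T) :
    Language.IsContextFree {w : List T | a :: w ∈ L} := by
  obtain ⟨g, rfl⟩ := h
  exact ⟨g.leftQuotient a, language_leftQuotient⟩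

theorem append_left_quotient (h : L.IsContextFree) (u : List T) :
    Language.IsContextFree {w : List T | u ++ w ∈ L} := by
  induction u generalizing L with
  | nil => exact h
  | cons a u ih => exact ih (h.cons_quotient a)

theorem append_right_quotient (h : L.IsContextFree) (v : List T) :
    Language.IsContextFree {w : List T | w ++ v ∈ L} := by
  have hrev : Language.reverse {w | w ++ v ∈ L} = {w | v.reverse ++ w ∈ L.reverse} := by
    ext w
    change w.reverse ++ v ∈ L ↔ (v.reverse ++ w).reverse ∈ L
    simp
  exact .of_reverse (hrev ▸ h.reverse.append_left_quotient v.reverse)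

end Language.IsContextFree

theorem contextFree_conjugate_pair_general
    {G : Type} [Group G] (K : Subgroup G)
    {α : Type} (ψ : α → G)
    (hψ : ∀ g : G, ∃ w : List α, (w.map ψ).prod = g)
    (hcf : Language.IsContextFree {w : List α | (w.map ψ).prod ∈ K}) :
    ∀ g : G, Language.IsContextFree
      {w : List α | g * (w.map ψ).prod * g⁻¹ ∈ K} := by
  intro g
  obtain ⟨u, rfl⟩ := hψ g
  obtain ⟨v, hv⟩ := hψ (u.map ψ).prod⁻¹
  have hconj : {w : List α | (u.map ψ).prod * (w.map ψ).prod * (u.map ψ).prod⁻¹ ∈ K} =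
      {w | w ++ v ∈ {w | u ++ w ∈ {w : List α | (w.map ψ).prod ∈ K}}} := by
    ext w
    simp [hv, mul_assoc]
  exact hconj ▸ (hcf.append_left_quotient u).append_right_quotient v

/-- If `L(G,K,ψ)` is context-free then for every `g ∈ G` the word problem
of the conjugate subgroup `g⁻¹Kg` is context-free; note `ψ(w) ∈ g⁻¹Kg ↔ g·ψ(w)·g⁻¹ ∈ K`. -/
theorem contextFree_conjugate_pair
    {G : Type} [Group G] [Group.FG G] (K : Subgroup G)
    {α : Type} [Fintype α] (ψ : α → G)
    (hψ : ∀ g : G, ∃ w : List α, (w.map ψ).prod = g)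
    (hcf : Language.IsContextFree {w : List α | (w.map ψ).prod ∈ K}) :
    ∀ g : G, Language.IsContextFree
      {w : List α | g * (w.map ψ).prod * g⁻¹ ∈ K} :=
  contextFree_conjugate_pair_general K ψ hψ hcf
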